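/- Let u be a nonzero integer and let a be the largest divisor of k such that -u is a perfect a-th power, say -u = v^a with b = k/a. Then the polynomial X^b - v is irreducible over the rationals. -/

import Mathlib

/-!
Capelli's criterion, proved by induction on the prime factorisation of `n`. Writing `n = p * m`
with `p` prime, `X ^ (p * m) - a` is irreducible as soon as `X ^ p - a` is and `X ^ m - α` is
irreducible over `K⟮α⟯` for a root `α`. So it suffices to pass the hypotheses on `a` down to `α`.
For odd `p` this is done by the norm, `N(α) = a`. For `p = 2` the norm `N(α) = -a` handles odd
exponents, while `α = c * y ^ 2` with `y = s + t α` forces `2cst = 1` and `a = -4 c² s⁴`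
(comparing coordinates in the basis `1, α`), which excludes both `α = y ^ 2` and `α = -4 y ^ 4`.
Over `ℚ`, the hypotheses on the integer `v` extend to rationals since rational roots of integers
are integers.
-/

open Polynomial IntermediateField

section

variable {K : Type*} [Field K] {E : Type*} [Field E] [Algebra K E]

theorem isIntegral_of_minpoly_eq_X_pow_sub_C {n : ℕ} (hn : n ≠ 0) {a : K} {x : E}
    (hx : minpoly K x = X ^ n - C a) : IsIntegral K x :=
  minpoly.ne_zero_iff.mp (hx ▸ X_pow_sub_C_ne_zero (Nat.pos_of_ne_zero hn) a)

theorem norm_adjoinSimple_gen_of_minpoly_eq_X_pow_sub_C {n : ℕ} (hn : n ≠ 0) {a : K} {x : E}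
    (hx : minpoly K x = X ^ n - C a) :
    Algebra.norm K (AdjoinSimple.gen K x) = (-1) ^ (n + 1) * a := by
  have hint := isIntegral_of_minpoly_eq_X_pow_sub_C hn hx
  rw [← adjoin.powerBasis_gen hint, Algebra.PowerBasis.norm_gen_eq_coeff_zero_minpoly,
    adjoin.powerBasis_gen hint, minpoly_gen, adjoin.powerBasis_dim, hx, natDegree_X_pow_sub_C]
  simp [coeff_X_pow, hn.symm, pow_succ]

theorem exists_eq_add_mul_adjoinSimple_gen {a : K} {x : E} (hx : minpoly K x = X ^ 2 - C a)
    (y : K⟮x⟯) :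
    ∃ s t : K, y = algebraMap K K⟮x⟯ s + algebraMap K K⟮x⟯ t * AdjoinSimple.gen K x := by
  have hint := isIntegral_of_minpoly_eq_X_pow_sub_C two_ne_zero hx
  obtain ⟨f, hf, rfl⟩ := (adjoin.powerBasis hint).exists_eq_aeval y
  rw [adjoin.powerBasis_dim, hx, natDegree_X_pow_sub_C] at hf
  obtain ⟨t, s, rfl⟩ := exists_eq_X_add_C_of_natDegree_le_one (Nat.le_of_lt_succ hf)
  refine ⟨s, t, ?_⟩
  simp [add_comm]

theorem exists_eq_neg_four_mul_of_adjoinSimple_gen_eq_mul_sq {a : K} {x : E}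
    (hx : minpoly K x = X ^ 2 - C a) {c : K} {y : K⟮x⟯}
    (h : AdjoinSimple.gen K x = algebraMap K K⟮x⟯ c * y ^ 2) :
    ∃ s : K, a = -4 * c ^ 2 * s ^ 4 := by
  have hint := isIntegral_of_minpoly_eq_X_pow_sub_C two_ne_zero hx
  have ha : ∀ b : K, b ^ 2 ≠ a :=
    pow_ne_of_irreducible_X_pow_sub_C (hx ▸ minpoly.irreducible hint) dvd_rfl (by norm_num)
  obtain ⟨s, t, rfl⟩ := exists_eq_add_mul_adjoinSimple_gen hx y
  set α := AdjoinSimple.gen K x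
  have hα : α ^ 2 = algebraMap K K⟮x⟯ a := by
    have h0 := minpoly.aeval K α
    rwa [minpoly_gen, hx, map_sub, map_pow, aeval_X, aeval_C, sub_eq_zero] at h0
  have coeff_eq_zero : ∀ r r' : K,
      algebraMap K K⟮x⟯ r + algebraMap K K⟮x⟯ r' * α = 0 → r' = 0 ∧ r = 0 := by
    intro r r' hr
    have hr' : r' = 0 := by
      by_contra hr'
      have hαK : algebraMap K K⟮x⟯ (-r / r') = α := by
        rw [map_div₀, map_neg, eq_neg_of_add_eq_zero_left hr, neg_neg]
        exact mul_div_cancel_left₀ α ((_root_.map_ne_zero _).mpr hr')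
      exact ha (-r / r') (FaithfulSMul.algebraMap_injective K K⟮x⟯ (by rw [map_pow, hαK, hα]))
    subst hr'
    simpa using hr
  obtain ⟨h1, h2⟩ := coeff_eq_zero (c * (s ^ 2 + t ^ 2 * a)) (2 * c * s * t - 1) (by
    simp only [map_add, map_mul, map_pow, map_sub, map_one, map_ofNat]
    linear_combination -(algebraMap K K⟮x⟯ c * algebraMap K K⟮x⟯ t ^ 2) * hα - h)
  exact ⟨s, by linear_combination (-a * (2 * c * s * t + 1)) * h1 + 4 * c * s ^ 2 * h2⟩

theorem adjoinSimple_gen_ne_pow_of_odd {p : ℕ} (hp : Odd p) {a : K} {x : E}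
    (hx : minpoly K x = X ^ p - C a) {q : ℕ} (ha : ∀ b : K, b ^ q ≠ a) (y : K⟮x⟯) :
    y ^ q ≠ AdjoinSimple.gen K x := fun hy ↦ by
  refine ha (Algebra.norm K y) ?_
  rw [← map_pow, hy, norm_adjoinSimple_gen_of_minpoly_eq_X_pow_sub_C hp.pos.ne' hx,
    hp.add_one.neg_one_pow, one_mul]

theorem adjoinSimple_gen_ne_neg_four_mul_pow_four_of_odd {p : ℕ} (hp : Odd p) {a : K} {x : E}
    (hx : minpoly K x = X ^ p - C a) (ha : ∀ b : K, a ≠ -4 * b ^ 4) (y : K⟮x⟯) :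
    AdjoinSimple.gen K x ≠ -4 * y ^ 4 := fun hy ↦ by
  obtain ⟨k, rfl⟩ := hp
  refine ha (2 ^ k * Algebra.norm K y) ?_
  have hnorm := congrArg (Algebra.norm K) hy
  have hfinrank : Module.finrank K K⟮x⟯ = 2 * k + 1 := by
    rw [adjoin.finrank (isIntegral_of_minpoly_eq_X_pow_sub_C (by omega) hx), hx,
      natDegree_X_pow_sub_C]
  rw [norm_adjoinSimple_gen_of_minpoly_eq_X_pow_sub_C (by omega) hx,
    show (-4 : K⟮x⟯) = algebraMap K K⟮x⟯ (-4) by rw [map_neg, map_ofNat], map_mul,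
    Algebra.norm_algebraMap, hfinrank, map_pow] at hnorm
  rw [show 2 * k + 1 + 1 = 2 * (k + 1) by ring, pow_mul, neg_one_sq, one_pow, one_mul] at hnorm
  have h16 : (-4 : K) ^ (2 * k) = (2 ^ k) ^ 4 := by
    rw [pow_mul, ← pow_mul 2 k 4, mul_comm k 4, pow_mul (2 : K) 4 k]
    norm_num
  rw [hnorm, pow_succ, h16]
  ring

theorem adjoinSimple_gen_ne_pow_of_two {a : K} {x : E} (hx : minpoly K x = X ^ 2 - C a)
    {q : ℕ} (hq : Odd q) (ha : ∀ b : K, b ^ q ≠ a) (y : K⟮x⟯) :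
    y ^ q ≠ AdjoinSimple.gen K x := fun hy ↦ by
  refine ha (-Algebra.norm K y) ?_
  rw [hq.neg_pow, ← map_pow, hy, norm_adjoinSimple_gen_of_minpoly_eq_X_pow_sub_C two_ne_zero hx]
  ring

theorem adjoinSimple_gen_ne_sq_of_two {a : K} {x : E} (hx : minpoly K x = X ^ 2 - C a)
    (ha : ∀ b : K, a ≠ -4 * b ^ 4) (y : K⟮x⟯) : y ^ 2 ≠ AdjoinSimple.gen K x := fun hy ↦ by
  obtain ⟨s, hs⟩ := exists_eq_neg_four_mul_of_adjoinSimple_gen_eq_mul_sq hx (c := 1) (y := y)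
    (by rw [map_one, one_mul, hy])
  exact ha s (by simpa using hs)

theorem adjoinSimple_gen_ne_neg_four_mul_pow_four_of_two {a : K} {x : E}
    (hx : minpoly K x = X ^ 2 - C a) (ha : ∀ b : K, a ≠ -4 * b ^ 4) (y : K⟮x⟯) :
    AdjoinSimple.gen K x ≠ -4 * y ^ 4 := fun hy ↦ by
  obtain ⟨s, hs⟩ :=
    exists_eq_neg_four_mul_of_adjoinSimple_gen_eq_mul_sq hx (c := -4) (y := y ^ 2)
      (by rw [hy, map_neg, map_ofNat]; ring)
  exact ha (2 * s) (by linear_combination hs)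

end

theorem X_pow_sub_C_irreducible_of_forall_prime {K : Type*} [Field K] {n : ℕ} (hn : n ≠ 0)
    {a : K} (ha : ∀ p : ℕ, p.Prime → p ∣ n → ∀ b : K, b ^ p ≠ a)
    (ha4 : 4 ∣ n → ∀ b : K, a ≠ -4 * b ^ 4) :
    Irreducible (X ^ n - C a) := by
  induction n using induction_on_primes generalizing K a with
  | zero => exact absurd rfl hn
  | one => simpa using irreducible_X_sub_C a
  | prime_mul p n hp IH =>
    rw [mul_comm]
    refine X_pow_mul_sub_C_irreducible
      (X_pow_sub_C_irreducible_of_prime hp (ha p hp (dvd_mul_right p n))) fun E _ _ x hx ↦ ?_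
    have hn0 : n ≠ 0 := right_ne_zero_of_mul hn
    have ha' : ∀ q : ℕ, q.Prime → q ∣ n → ∀ b : K, b ^ q ≠ a :=
      fun q hq hqn ↦ ha q hq (dvd_mul_of_dvd_right hqn p)
    rcases hp.eq_two_or_odd' with rfl | hodd
    · have ha4' : 2 ∣ n → ∀ b : K, a ≠ -4 * b ^ 4 := fun h2 ↦ ha4 (mul_dvd_mul_left 2 h2)
      refine IH hn0 (fun q hq hqn ↦ ?_) fun h4 ↦ adjoinSimple_gen_ne_neg_four_mul_pow_four_of_two
        hx (ha4' ((by norm_num : 2 ∣ 4).trans h4))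
      rcases hq.eq_two_or_odd' with rfl | hqodd
      · exact adjoinSimple_gen_ne_sq_of_two hx (ha4' hqn)
      · exact adjoinSimple_gen_ne_pow_of_two hx hqodd (ha' q hq hqn)
    · exact IH hn0 (fun q hq hqn ↦ adjoinSimple_gen_ne_pow_of_odd hodd hx (ha' q hq hqn))
        fun h4 ↦ adjoinSimple_gen_ne_neg_four_mul_pow_four_of_odd hodd hx
          (ha4 (dvd_mul_of_dvd_right h4 p))

theorem Rat.exists_intCast_eq_of_pow_eq_intCast {q : ℚ} {n : ℕ} (hn : n ≠ 0) {z : ℤ}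
    (h : q ^ n = z) : ∃ w : ℤ, (w : ℚ) = q := by
  have hden : q.den ^ n = 1 := by rw [← Rat.den_pow, h, Rat.den_intCast]
  exact ⟨q.num, Rat.coe_int_num_of_den_eq_one (by simpa [hn] using hden)⟩

theorem Int.exists_eq_neg_four_mul_pow_four_of_eq_ratCast {v : ℤ} {w : ℚ}
    (h : (v : ℚ) = -4 * w ^ 4) : ∃ j : ℤ, v = -4 * j ^ 4 := by
  have h2w : (2 * w) ^ 4 = ((-4 * v : ℤ) : ℚ) := by push_cast; linear_combination 4 * h
  obtain ⟨z, hz⟩ := Rat.exists_intCast_eq_of_pow_eq_intCast four_ne_zero h2w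
  have hz4 : z ^ 4 = -4 * v := by exact_mod_cast hz ▸ h2w
  obtain ⟨j, rfl⟩ : 2 ∣ z :=
    Int.Prime.dvd_pow' Nat.prime_two (show (2 : ℤ) ∣ z ^ 4 from ⟨-2 * v, by rw [hz4]; ring⟩)
  exact ⟨j, by linarith⟩

open Polynomial in
theorem stmt_5 (b : ℕ) (hb : 0 < b) (v : ℤ)
    (h1 : ∀ r : ℕ, r.Prime → r ∣ b → ¬ ∃ w : ℤ, w ^ r = v)
    (h2 : 4 ∣ b → ¬ ∃ w : ℤ, v = -4 * w ^ 4) :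
    Irreducible (X ^ b - C (v : ℚ)) := by
  refine X_pow_sub_C_irreducible_of_forall_prime hb.ne' (fun r hr hrb w hw ↦ ?_)
    fun h4 w hw ↦ h2 h4 (Int.exists_eq_neg_four_mul_pow_four_of_eq_ratCast hw)
  obtain ⟨w, rfl⟩ := Rat.exists_intCast_eq_of_pow_eq_intCast hr.ne_zero hw
  exact h1 r hr hrb ⟨w, by exact_mod_cast hw⟩
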